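/- Let μ_A and μ_B be equivalent weight measures over the same finite alphabet Σ. Then: (i) μ_A is gapfree if and only if μ_B is gapfree; (ii) μ_A is injective if and only if μ_B is injective; (iii) given a total order on Σ, μ_A is alphabetically ordered if and only if μ_B is alphabetically ordered. -/

import Mathlib

/-!
Words of length one show that equivalent measures order the letters alike, which gives
injectivity and alphabetical order. For gapfreeness, all factors of `w` of length `i` have the
same length, so a `μ`-heaviest one is also `ν`-heaviest: `f_{w,μ}(i)` and `f_{w,ν}(i)` are
realised by one common factor `u`, and likewise for `i - 1` by some `u'`. The gap equation
`μ(u) = μ(u' a)` compares words of equal length, so it transfers to `ν`.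
-/

/-- The weight of a word: the product of the weights of its letters. -/
def weight {α A : Type*} [CommMonoid A] [LinearOrder A] [IsOrderedCancelMonoid A] (μ : α → A) (w : List α) : A :=
  (w.map μ).prod

/-- The factor-weight function: `factorWeight μ w i` is the maximum weight of a
length-`i` factor (contiguous subword) of `w`. -/
def factorWeight {α A : Type*} [CommMonoid A] [LinearOrder A] [IsOrderedCancelMonoid A] (μ : α → A)
    (w : List α) (i : ℕ) : A :=
  ((List.range (w.length + 1 - i)).map fun j => weight μ ((w.drop j).take i)).foldr max 1

/-- A word is `μ`-prefix normal if its factor-weight function agrees with its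
prefix-weight function. -/
def PrefixNormal {α A : Type*} [CommMonoid A] [LinearOrder A] [IsOrderedCancelMonoid A] (μ : α → A)
    (w : List α) : Prop :=
  ∀ i ≤ w.length, factorWeight μ w i = weight μ (w.take i)

/-- A weight measure is gapfree if for every word `w` and every `1 ≤ i ≤ |w|` there is a
letter `a` with `f_{w,μ}(i) = f_{w,μ}(i-1) * μ a`. -/
def Gapfree {α A : Type*} [CommMonoid A] [LinearOrder A] [IsOrderedCancelMonoid A] (μ : α → A) : Prop :=
  ∀ w : List α, ∀ i, 1 ≤ i → i ≤ w.length →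
    ∃ a : α, factorWeight μ w i = factorWeight μ w (i - 1) * μ a

/-- `pnClass μ w` is the set `P_μ(w)` of words that are factor-weight equivalent to `w`
and `μ`-prefix normal. -/
def pnClass {α A : Type*} [CommMonoid A] [LinearOrder A] [IsOrderedCancelMonoid A] (μ : α → A)
    (w : List α) : Set (List α) :=
  {v | (∀ i, factorWeight μ v i = factorWeight μ w i) ∧ PrefixNormal μ v}

/-- Two weight measures over the same alphabet are equivalent if they compare words of
equal length in the same way. -/
def EquivWeightMeasures {α A B : Type*} [CommMonoid A] [LinearOrder A] [IsOrderedCancelMonoid A]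
    [CommMonoid B] [LinearOrder B] [IsOrderedCancelMonoid B] (μ : α → A) (ν : α → B) : Prop :=
  ∀ v w : List α, v.length = w.length → (weight μ v < weight μ w ↔ weight ν v < weight ν w)

lemma List.foldr_max_le_iff {C : Type*} [LinearOrder C] {l : List C} {d c : C} :
    l.foldr max d ≤ c ↔ d ≤ c ∧ ∀ x ∈ l, x ≤ c := by
  induction l with
  | nil => simp
  | cons a t ih => simp only [List.foldr_cons, max_le_iff, ih, List.forall_mem_cons]; tauto

lemma List.le_foldr_max_of_mem {C : Type*} [LinearOrder C] {l : List C} {d x : C} (hx : x ∈ l) :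
    x ≤ l.foldr max d :=
  (List.foldr_max_le_iff.mp le_rfl).2 x hx

section WeightMeasure

variable {α A B : Type*} [CommMonoid A] [LinearOrder A] [IsOrderedCancelMonoid A]
  [CommMonoid B] [LinearOrder B] [IsOrderedCancelMonoid B]

@[simp]
lemma weight_singleton (μ : α → A) (a : α) : weight μ [a] = μ a := by
  simp [weight]

lemma weight_concat (μ : α → A) (u : List α) (a : α) : weight μ (u ++ [a]) = weight μ u * μ a := by
  simp [weight]

lemma one_le_weight {μ : α → A} (hμ : ∀ a, 1 ≤ μ a) (w : List α) : 1 ≤ weight μ w :=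
  List.one_le_prod_of_one_le fun _ hx => by
    obtain ⟨a, -, rfl⟩ := List.mem_map.mp hx
    exact hμ a

lemma length_factor {w : List α} {i j : ℕ} (hj : j < w.length + 1 - i) :
    ((w.drop j).take i).length = i := by
  simp only [List.length_take, List.length_drop]
  omega

lemma factorWeight_eq_weight_factor {μ : α → A} (hμ : ∀ a, 1 ≤ μ a) {w : List α} {i j : ℕ}
    (hj : j < w.length + 1 - i)
    (hmax : ∀ k < w.length + 1 - i, weight μ ((w.drop k).take i) ≤ weight μ ((w.drop j).take i)) :
    factorWeight μ w i = weight μ ((w.drop j).take i) := by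
  refine le_antisymm (List.foldr_max_le_iff.mpr ⟨one_le_weight hμ _, ?_⟩)
    (List.le_foldr_max_of_mem (List.mem_map.mpr ⟨j, List.mem_range.mpr hj, rfl⟩))
  simp only [List.mem_map, List.mem_range]
  rintro _ ⟨k, hk, rfl⟩
  exact hmax k hk

namespace EquivWeightMeasures

variable {μ : α → A} {ν : α → B}

lemma symm (hequiv : EquivWeightMeasures μ ν) : EquivWeightMeasures ν μ :=
  fun v w h => (hequiv v w h).symm

lemma weight_le_iff (hequiv : EquivWeightMeasures μ ν) {v w : List α} (h : v.length = w.length) :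
    weight μ v ≤ weight μ w ↔ weight ν v ≤ weight ν w := by
  rw [← not_lt, ← not_lt, hequiv w v h.symm]

lemma weight_eq_iff (hequiv : EquivWeightMeasures μ ν) {v w : List α} (h : v.length = w.length) :
    weight μ v = weight μ w ↔ weight ν v = weight ν w := by
  rw [le_antisymm_iff, le_antisymm_iff, hequiv.weight_le_iff h, hequiv.weight_le_iff h.symm]

lemma le_iff (hequiv : EquivWeightMeasures μ ν) (a b : α) : μ a ≤ μ b ↔ ν a ≤ ν b := by
  simpa using hequiv.weight_le_iff (v := [a]) (w := [b]) rfl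

lemma eq_iff (hequiv : EquivWeightMeasures μ ν) (a b : α) : μ a = μ b ↔ ν a = ν b := by
  simpa using hequiv.weight_eq_iff (v := [a]) (w := [b]) rfl

lemma injective_iff (hequiv : EquivWeightMeasures μ ν) :
    Function.Injective μ ↔ Function.Injective ν :=
  forall₂_congr fun a b => imp_congr_left (hequiv.eq_iff a b)

lemma monotone_iff [Preorder α] (hequiv : EquivWeightMeasures μ ν) : Monotone μ ↔ Monotone ν :=
  forall₂_congr fun a b => imp_congr_right fun _ => hequiv.le_iff a b

lemma exists_factor_weight_eq_factorWeight (hequiv : EquivWeightMeasures μ ν)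
    (hμ : ∀ a, 1 ≤ μ a) (hν : ∀ a, 1 ≤ ν a) (w : List α) {i : ℕ} (hi : i ≤ w.length) :
    ∃ u : List α, u.length = i ∧ weight μ u = factorWeight μ w i ∧
      weight ν u = factorWeight ν w i := by
  obtain ⟨j, hj, hmax⟩ := (Finset.range (w.length + 1 - i)).exists_max_image
    (fun k => weight μ ((w.drop k).take i)) ⟨0, Finset.mem_range.mpr (by omega)⟩
  rw [Finset.mem_range] at hj
  have hmax : ∀ k < w.length + 1 - i,
      weight μ ((w.drop k).take i) ≤ weight μ ((w.drop j).take i) :=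
    fun k hk => hmax k (Finset.mem_range.mpr hk)
  have hmaxν : ∀ k < w.length + 1 - i,
      weight ν ((w.drop k).take i) ≤ weight ν ((w.drop j).take i) := fun k hk =>
    (hequiv.weight_le_iff ((length_factor hk).trans (length_factor hj).symm)).mp (hmax k hk)
  exact ⟨_, length_factor hj, (factorWeight_eq_weight_factor hμ hj hmax).symm,
    (factorWeight_eq_weight_factor hν hj hmaxν).symm⟩

lemma gapfree (hequiv : EquivWeightMeasures μ ν) (hμ : ∀ a, 1 ≤ μ a) (hν : ∀ a, 1 ≤ ν a)
    (hgap : Gapfree μ) : Gapfree ν := by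
  intro w i hi hiw
  obtain ⟨u, hu, huμ, huν⟩ := hequiv.exists_factor_weight_eq_factorWeight hμ hν w hiw
  obtain ⟨u', hu', hu'μ, hu'ν⟩ :=
    hequiv.exists_factor_weight_eq_factorWeight hμ hν w (i := i - 1) (by omega)
  obtain ⟨a, ha⟩ := hgap w i hi hiw
  have hlen : u.length = (u' ++ [a]).length := by
    rw [List.length_append, hu, hu']
    simp only [List.length_singleton]
    omega
  have hμeq : weight μ u = weight μ (u' ++ [a]) := by
    rw [huμ, ha, ← hu'μ, weight_concat]
  refine ⟨a, ?_⟩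
  rw [← huν, (hequiv.weight_eq_iff hlen).mp hμeq, weight_concat, hu'ν]

end EquivWeightMeasures

end WeightMeasure

theorem equiv_weightMeasures_preserve_properties_general {α A B : Type*}
    [LinearOrder α] [CommMonoid A] [LinearOrder A] [IsOrderedCancelMonoid A] [CommMonoid B] [LinearOrder B] [IsOrderedCancelMonoid B]
    (μ : α → A) (ν : α → B) (hμ : ∀ a : α, 1 < μ a) (hν : ∀ a : α, 1 < ν a)
    (hequiv : EquivWeightMeasures μ ν) :
    (Gapfree μ ↔ Gapfree ν) ∧
    (Function.Injective μ ↔ Function.Injective ν) ∧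
    ((∀ a b : α, a ≤ b → μ a ≤ μ b) ↔ (∀ a b : α, a ≤ b → ν a ≤ ν b)) :=
  have hμ' : ∀ a, 1 ≤ μ a := fun a => (hμ a).le
  have hν' : ∀ a, 1 ≤ ν a := fun a => (hν a).le
  ⟨⟨hequiv.gapfree hμ' hν', hequiv.symm.gapfree hν' hμ'⟩, hequiv.injective_iff,
    hequiv.monotone_iff⟩

/-- For equivalent weight measures `μ` and `ν`: (i) `μ` is gapfree iff `ν` is gapfree;
(ii) `μ` is injective iff `ν` is injective; (iii) given a total order on the alphabet,
`μ` is alphabetically ordered iff `ν` is alphabetically ordered. -/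
theorem equiv_weightMeasures_preserve_properties {α A B : Type*} [Fintype α]
    [LinearOrder α] [CommMonoid A] [LinearOrder A] [IsOrderedCancelMonoid A] [CommMonoid B] [LinearOrder B] [IsOrderedCancelMonoid B]
    (μ : α → A) (ν : α → B) (hμ : ∀ a : α, 1 < μ a) (hν : ∀ a : α, 1 < ν a)
    (hequiv : EquivWeightMeasures μ ν) :
    (Gapfree μ ↔ Gapfree ν) ∧
    (Function.Injective μ ↔ Function.Injective ν) ∧
    ((∀ a b : α, a ≤ b → μ a ≤ μ b) ↔ (∀ a b : α, a ≤ b → ν a ≤ ν b)) :=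
  equiv_weightMeasures_preserve_properties_general μ ν hμ hν hequiv
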